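/- arXiv:0905.3840 — 2 statements merged into one kernel-verified Lean document; each statement's English description precedes it below -/
import Mathlib

section
/- Let W be a 4-linear form on ℝⁿ with the Weyl tensor symmetries and H_{ik}(x) = Σ_{p,q} W_{ipkq} x_p x_q. Then for every r > 0, ∫_{∂B_r(0)} Σ_{i,k,l} (∂_l H_{ik}(x))² x_p x_q dσ = (2/(n(n+2))) |S^{n-1}| Σ_{i,k,l} (W_{ipkl}+W_{ilkp})(W_{iqkl}+W_{ilkq}) r^{n+3} + (1/(n(n+2))) |S^{n-1}| Σ_{i,j,k,l} (W_{ijkl}+W_{ilkj})² δ_{pq} r^{n+3}. -/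
open MeasureTheory
set_option maxHeartbeats 1000000

/-- The total surface measure of the unit sphere `S^{n-1} ⊆ ℝⁿ`. -/
noncomputable def sphereArea (n : ℕ) : ℝ :=
  (((volume : Measure (EuclideanSpace ℝ (Fin n))).toSphere) Set.univ).toReal

/-- Surface measure on the sphere of radius `r` about the origin in `ℝⁿ`,
obtained by pushing forward the unit-sphere measure under scaling by `r` and
multiplying by the Jacobian factor `r^(n-1)`. -/
noncomputable def sphereMeasure (n : ℕ) (r : ℝ) : Measure (EuclideanSpace ℝ (Fin n)) :=
  ENNReal.ofReal (r ^ ((n : ℝ) - 1)) •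
    Measure.map
      (fun y : Metric.sphere (0 : EuclideanSpace ℝ (Fin n)) 1 =>
        r • (y : EuclideanSpace ℝ (Fin n)))
      ((volume : Measure (EuclideanSpace ℝ (Fin n))).toSphere)

/-- Partial derivative in the `i`-th coordinate direction. -/
noncomputable def pd {n : ℕ} (f : EuclideanSpace ℝ (Fin n) → ℝ) (i : Fin n)
    (x : EuclideanSpace ℝ (Fin n)) : ℝ :=
  fderiv ℝ f x (EuclideanSpace.single i 1)

section Aux
open Real Set Metric

/-! ### One-dimensional integrals -/

noncomputable def I1 (k : ℕ) : ℝ := ∫ r in Set.Ioi (0:ℝ), r ^ k * Real.exp (-r^2)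

lemma I1_eq (k : ℕ) : I1 k = (1/2) * Real.Gamma ((k+1)/2) := by
  have h := integral_rpow_mul_exp_neg_rpow (p := 2) (q := (k:ℝ)) two_pos
    (lt_of_lt_of_le neg_one_lt_zero (Nat.cast_nonneg k))
  rw [I1, ← h]
  refine setIntegral_congr_fun measurableSet_Ioi fun x hx => ?_
  rw [← Real.rpow_natCast x k, ← Real.rpow_natCast x 2]
  norm_num

lemma I1_pos (k : ℕ) : 0 < I1 k := by
  rw [I1_eq]
  have : (0:ℝ) < ((k:ℝ)+1)/2 := by positivity
  have := Real.Gamma_pos_of_pos this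
  linarith

lemma I1_succ2 (k : ℕ) : I1 (k+2) = (((k:ℝ)+1)/2) * I1 k := by
  rw [I1_eq, I1_eq]
  have h : ((k:ℝ)+2+1)/2 = ((k:ℝ)+1)/2 + 1 := by ring
  push_cast
  rw [h, Real.Gamma_add_one (by positivity)]
  ring

noncomputable def G (k : ℕ) : ℝ := ∫ x : ℝ, x ^ k * Real.exp (-x^2)

lemma G_even {k : ℕ} (hk : Even k) : G k = 2 * I1 k := by
  rw [G, I1, ← integral_comp_abs (f := fun x => x ^ k * Real.exp (-x^2))]
  congr 1 with x
  rw [hk.pow_abs, sq_abs]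

lemma G_odd {k : ℕ} (hk : Odd k) : G k = 0 := by
  have h := integral_neg_eq_self (μ := (volume : Measure ℝ))
    (fun x : ℝ => x ^ k * Real.exp (-x^2))
  simp only [hk.neg_pow, neg_sq, neg_mul] at h
  rw [MeasureTheory.integral_neg] at h
  have : G k = -G k := by rw [G]; exact h.symm
  linarith

lemma I1_two : I1 2 = 1/2 * I1 0 := by
  have h := I1_succ2 0; norm_num at h; linarith

lemma I1_four : I1 4 = 3/2 * I1 2 := by
  have h := I1_succ2 2; norm_num at h; linarith

lemma G_two : G 2 = G 0 / 2 := by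
  rw [G_even (by decide), G_even Even.zero, I1_two]; ring

lemma G_four : G 4 = 3 / 4 * G 0 := by
  rw [G_even (by decide), G_even Even.zero, I1_four, I1_two]; ring

/-! ### The combinatorial product lemma -/

variable {n : ℕ}

def mfun (a b c d : Fin n) (i : Fin n) : ℕ :=
  (if a = i then 1 else 0) + (if b = i then 1 else 0) + (if c = i then 1 else 0)
    + (if d = i then 1 else 0)

lemma prod_eq_one_off (f : Fin n → ℝ) (a : Fin n) (h : ∀ i, i ≠ a → f i = G 0) :
    ∏ i, f i = f a * G 0 ^ (n - 1) := by
  rw [← Finset.mul_prod_erase Finset.univ f (Finset.mem_univ a)]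
  congr 1
  rw [Finset.prod_congr rfl (fun i hi => h i (Finset.ne_of_mem_erase hi)),
    Finset.prod_const, Finset.card_erase_of_mem (Finset.mem_univ a), Finset.card_univ,
    Fintype.card_fin]

lemma prod_eq_two_off (f : Fin n → ℝ) (a b : Fin n) (hab : a ≠ b)
    (h : ∀ i, i ≠ a → i ≠ b → f i = G 0) :
    ∏ i, f i = f a * f b * G 0 ^ (n - 2) := by
  rw [← Finset.mul_prod_erase Finset.univ f (Finset.mem_univ a),
    ← Finset.mul_prod_erase _ f (Finset.mem_erase.2 ⟨hab.symm, Finset.mem_univ b⟩), ← mul_assoc]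
  congr 1
  rw [Finset.prod_congr rfl
      (fun i hi => h i (Finset.ne_of_mem_erase (Finset.mem_of_mem_erase hi))
        (Finset.ne_of_mem_erase hi)),
    Finset.prod_const, Finset.card_erase_of_mem
      (Finset.mem_erase.2 ⟨hab.symm, Finset.mem_univ b⟩),
    Finset.card_erase_of_mem (Finset.mem_univ a), Finset.card_univ, Fintype.card_fin,
    Nat.sub_sub]

lemma prod_G (a b c d : Fin n) :
    ∏ i, G (mfun a b c d i) =
      ((if a = b then (1:ℝ) else 0) * (if c = d then 1 else 0)
        + (if a = c then 1 else 0) * (if b = d then 1 else 0)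
        + (if a = d then 1 else 0) * (if b = c then 1 else 0)) * G 0 ^ n / 4 := by
  have hn : 1 ≤ n := a.pos
  by_cases hab : a = b
  · subst hab
    by_cases hac : a = c
    · subst hac
      by_cases had : a = d
      · subst had
        rw [prod_eq_one_off _ a (fun i hi => by
          have h' := hi.symm; simp [mfun, h'])]
        rw [show mfun a a a a a = 4 by simp [mfun]]
        have hG : G 0 ^ n = G 0 * G 0 ^ (n-1) := by
          rw [← pow_succ', Nat.sub_add_cancel hn]
        rw [G_four, if_pos rfl, hG]; ring
      · rw [Finset.prod_eq_zero (Finset.mem_univ d)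
          (by rw [show mfun a a a d d = 1 by
                have h' : ¬ a = d := had
                simp [mfun, h']]
              exact G_odd (by decide))]
        simp [had]
    · by_cases hcd : c = d
      · subst hcd
        have hca : ¬ c = a := fun h => hac h.symm
        rw [prod_eq_two_off _ a c hac (fun i hia hic => by
          have h1 := hia.symm; have h2 := hic.symm; simp [mfun, h1, h2])]
        rw [show mfun a a c c a = 2 by simp [mfun, hca],
          show mfun a a c c c = 2 by simp [mfun, hac]]
        have hn2 : 2 ≤ n := by
          have h2 := Fintype.one_lt_card_iff.2 ⟨a, c, hac⟩
          rwa [Fintype.card_fin] at h2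
        have hG : G 0 ^ n = G 0 ^ 2 * G 0 ^ (n-2) := by
          rw [← pow_add]; congr 1; omega
        rw [G_two, hG]; simp [hac]; ring
      · rw [Finset.prod_eq_zero (Finset.mem_univ c)
          (by rw [show mfun a a c d c = 1 by
                have h1 : ¬ d = c := fun h => hcd h.symm
                simp [mfun, hac, h1]]
              exact G_odd (by decide))]
        simp [hac, hcd]
  · by_cases hac : a = c
    · subst hac
      by_cases hbd : b = d
      · subst hbd
        have hba : ¬ b = a := fun h => hab h.symm
        rw [prod_eq_two_off _ a b hab (fun i hia hib => by
          have h1 := hia.symm; have h2 := hib.symm; simp [mfun, h1, h2])]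
        rw [show mfun a b a b a = 2 by simp [mfun, hba],
          show mfun a b a b b = 2 by simp [mfun, hab]]
        have hn2 : 2 ≤ n := by
          have h2 := Fintype.one_lt_card_iff.2 ⟨a, b, hab⟩
          rwa [Fintype.card_fin] at h2
        have hG : G 0 ^ n = G 0 ^ 2 * G 0 ^ (n-2) := by
          rw [← pow_add]; congr 1; omega
        rw [G_two, hG]; simp [hab]; ring
      · rw [Finset.prod_eq_zero (Finset.mem_univ b)
          (by rw [show mfun a b a d b = 1 by
                have h1 : ¬ a = b := hab
                have h2 : ¬ d = b := fun h => hbd h.symm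
                simp [mfun, h1, h2]]
              exact G_odd (by decide))]
        have hba : ¬ b = a := fun h => hab h.symm
        simp [hab, hbd, hba]
    · by_cases had : a = d
      · subst had
        by_cases hbc : b = c
        · subst hbc
          have hba : ¬ b = a := fun h => hab h.symm
          rw [prod_eq_two_off _ a b hab (fun i hia hib => by
            have h1 := hia.symm; have h2 := hib.symm; simp [mfun, h1, h2])]
          rw [show mfun a b b a a = 2 by simp [mfun, hba],
            show mfun a b b a b = 2 by simp [mfun, hab]]
          have hn2 : 2 ≤ n := by
            have h2 := Fintype.one_lt_card_iff.2 ⟨a, b, hab⟩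
            rwa [Fintype.card_fin] at h2
          have hG : G 0 ^ n = G 0 ^ 2 * G 0 ^ (n-2) := by
            rw [← pow_add]; congr 1; omega
          rw [G_two, hG]; simp [hab]; ring
        · rw [Finset.prod_eq_zero (Finset.mem_univ b)
            (by rw [show mfun a b c a b = 1 by
                  have h1 : ¬ a = b := hab
                  have h2 : ¬ c = b := fun h => hbc h.symm
                  simp [mfun, h1, h2]]
                exact G_odd (by decide))]
          simp [hab, hac, hbc]
      · rw [Finset.prod_eq_zero (Finset.mem_univ a)
          (by rw [show mfun a b c d a = 1 by
                have h1 : ¬ b = a := fun h => hab h.symm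
                have h2 : ¬ c = a := fun h => hac h.symm
                have h3 : ¬ d = a := fun h => had h.symm
                simp [mfun, h1, h2, h3]]
              exact G_odd (by decide))]
        simp [hab, hac, had]

/-! ### Gaussian integrals over Euclidean space -/

lemma norm_sq_eq (x : EuclideanSpace ℝ (Fin n)) : ‖x‖^2 = ∑ i, x i ^ 2 := by
  rw [EuclideanSpace.norm_eq, Real.sq_sqrt (by positivity)]
  simp [sq_abs]

lemma prod_pow_ite (y : Fin n → ℝ) (z : Fin n) :
    ∏ i, y i ^ (if z = i then 1 else 0) = y z := by
  calc ∏ i, y i ^ (if z = i then 1 else 0) = ∏ i, (if z = i then y i else 1) :=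
        Finset.prod_congr rfl (fun i _ => by split <;> simp)
    _ = y z := by simp

lemma gauss_moment (a b c d : Fin n) :
    ∫ x : EuclideanSpace ℝ (Fin n), x a * x b * x c * x d * Real.exp (-‖x‖^2) =
      ∏ i, G (mfun a b c d i) := by
  have e : MeasurePreserving (MeasurableEquiv.toLp 2 (Fin n → ℝ)) :=
    (EuclideanSpace.volume_preserving_symm_measurableEquiv_toLp (Fin n)).symm
  rw [← MeasurePreserving.integral_comp' (f := (MeasurableEquiv.toLp 2 (Fin n → ℝ))) e
    (fun x : EuclideanSpace ℝ (Fin n) => x a * x b * x c * x d * Real.exp (-‖x‖^2))]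
  have hcoord : ∀ (y : Fin n → ℝ) (i : Fin n),
      ((MeasurableEquiv.toLp 2 (Fin n → ℝ)) y) i = y i := fun y i => rfl
  have hpt : ∀ y : Fin n → ℝ,
      ((MeasurableEquiv.toLp 2 (Fin n → ℝ)) y) a *
        ((MeasurableEquiv.toLp 2 (Fin n → ℝ)) y) b *
        ((MeasurableEquiv.toLp 2 (Fin n → ℝ)) y) c *
        ((MeasurableEquiv.toLp 2 (Fin n → ℝ)) y) d *
        Real.exp (-‖(MeasurableEquiv.toLp 2 (Fin n → ℝ)) y‖^2) =
      ∏ i, (y i ^ mfun a b c d i * Real.exp (-(y i)^2)) := by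
    intro y
    rw [Finset.prod_mul_distrib, norm_sq_eq]
    simp only [hcoord]
    congr 1
    · simp only [mfun, pow_add, Finset.prod_mul_distrib, prod_pow_ite]
    · rw [← Real.exp_sum]
      congr 1
      simp
  calc ∫ y : Fin n → ℝ, ((MeasurableEquiv.toLp 2 (Fin n → ℝ)) y) a *
        ((MeasurableEquiv.toLp 2 (Fin n → ℝ)) y) b *
        ((MeasurableEquiv.toLp 2 (Fin n → ℝ)) y) c *
        ((MeasurableEquiv.toLp 2 (Fin n → ℝ)) y) d *
        Real.exp (-‖(MeasurableEquiv.toLp 2 (Fin n → ℝ)) y‖^2)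
      = ∫ y : Fin n → ℝ, ∏ i, (y i ^ mfun a b c d i * Real.exp (-(y i)^2)) := by
        congr 1; funext y; exact hpt y
    _ = ∏ i, G (mfun a b c d i) :=
        MeasureTheory.integral_fintype_prod_volume_eq_prod (ι := Fin n)
          (fun i t => t ^ mfun a b c d i * Real.exp (-t^2))

lemma gauss_const :
    ∫ x : EuclideanSpace ℝ (Fin n), Real.exp (-‖x‖^2) = G 0 ^ n := by
  have e : MeasurePreserving (MeasurableEquiv.toLp 2 (Fin n → ℝ)) :=
    (EuclideanSpace.volume_preserving_symm_measurableEquiv_toLp (Fin n)).symm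
  rw [← MeasurePreserving.integral_comp' (f := (MeasurableEquiv.toLp 2 (Fin n → ℝ))) e
    (fun x : EuclideanSpace ℝ (Fin n) => Real.exp (-‖x‖^2))]
  have hpt : ∀ y : Fin n → ℝ,
      Real.exp (-‖(MeasurableEquiv.toLp 2 (Fin n → ℝ)) y‖^2) =
        ∏ i, Real.exp (-(y i)^2) := by
    intro y
    rw [norm_sq_eq, ← Real.exp_sum]
    congr 1
    rw [← Finset.sum_neg_distrib]
    exact Finset.sum_congr rfl fun i _ => rfl
  calc ∫ y : Fin n → ℝ, Real.exp (-‖(MeasurableEquiv.toLp 2 (Fin n → ℝ)) y‖^2)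
      = ∫ y : Fin n → ℝ, ∏ i, Real.exp (-(y i)^2) := by congr 1; funext y; exact hpt y
    _ = (∫ t : ℝ, Real.exp (-t^2)) ^ n := by
        rw [MeasureTheory.integral_fintype_prod_volume_eq_pow (ι := Fin n) (fun t => Real.exp (-t^2))]
        simp
    _ = G 0 ^ n := by rw [G]; norm_num

/-! ### Polar coordinates -/

lemma polar [Nontrivial (EuclideanSpace ℝ (Fin n))] (f : EuclideanSpace ℝ (Fin n) → ℝ) :
    ∫ x : EuclideanSpace ℝ (Fin n), f x =
      ∫ z : sphere (0:EuclideanSpace ℝ (Fin n)) 1 × Ioi (0:ℝ),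
        f ((z.2 : ℝ) • (z.1 : EuclideanSpace ℝ (Fin n)))
        ∂((volume : Measure (EuclideanSpace ℝ (Fin n))).toSphere.prod
            (Measure.volumeIoiPow (n - 1))) := by
  have hdim : Module.finrank ℝ (EuclideanSpace ℝ (Fin n)) = n := finrank_euclideanSpace_fin
  calc
    ∫ x : EuclideanSpace ℝ (Fin n), f x
        = ∫ x : ({(0:EuclideanSpace ℝ (Fin n))}ᶜ : Set (EuclideanSpace ℝ (Fin n))), f x.1
        ∂(volume.comap (Subtype.val :
            ({(0:EuclideanSpace ℝ (Fin n))}ᶜ : Set (EuclideanSpace ℝ (Fin n)))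
              → EuclideanSpace ℝ (Fin n))) := by
      rw [MeasureTheory.integral_subtype_comap
        (measurableSet_singleton (0:EuclideanSpace ℝ (Fin n))).compl
        (fun x => f x), MeasureTheory.restrict_compl_singleton]
    _ = ∫ z : sphere (0:EuclideanSpace ℝ (Fin n)) 1 × Ioi (0:ℝ),
          f ((z.2 : ℝ) • (z.1 : EuclideanSpace ℝ (Fin n)))
        ∂((volume : Measure (EuclideanSpace ℝ (Fin n))).toSphere.prod
            (Measure.volumeIoiPow (Module.finrank ℝ (EuclideanSpace ℝ (Fin n)) - 1))) := by
      have hmp := ((volume : Measure (EuclideanSpace ℝ (Fin n))).measurePreserving_homeomorphUnitSphereProd).integral_comp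
        (Homeomorph.measurableEmbedding _)
        (fun z : sphere (0:EuclideanSpace ℝ (Fin n)) 1 × Ioi (0:ℝ) =>
          f ((z.2 : ℝ) • (z.1 : EuclideanSpace ℝ (Fin n))))
      rw [← hmp]
      refine integral_congr_ae (Filter.Eventually.of_forall fun x => ?_)
      have hx : (x : EuclideanSpace ℝ (Fin n)) ≠ 0 := x.2
      simp only [homeomorphUnitSphereProd_apply_fst_coe, homeomorphUnitSphereProd_apply_snd_coe]
      rw [smul_smul, mul_inv_cancel₀ (norm_ne_zero_iff.2 hx), one_smul]
    _ = _ := by rw [hdim]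

lemma ioipow_integral (m : ℕ) (g : ℝ → ℝ) :
    ∫ z : Ioi (0:ℝ), g z ∂(Measure.volumeIoiPow m) = ∫ r in Ioi (0:ℝ), r ^ m * g r := by
  simp only [Measure.volumeIoiPow, ENNReal.ofReal]
  rw [integral_withDensity_eq_integral_smul
      ((measurable_subtype_coe.pow_const _).real_toNNReal),
    MeasureTheory.integral_subtype_comap measurableSet_Ioi
      (fun r : ℝ => (r ^ m).toNNReal • g r)]
  refine setIntegral_congr_fun measurableSet_Ioi fun r hr => ?_
  rw [NNReal.smul_def, Real.coe_toNNReal _ (pow_nonneg (le_of_lt hr) _), smul_eq_mul]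

/-! ### Sphere moments -/

lemma euclid_nontrivial (a : Fin n) : Nontrivial (EuclideanSpace ℝ (Fin n)) := by
  refine ⟨EuclideanSpace.single a 1, 0, fun h => ?_⟩
  have := congrFun (congrArg WithLp.ofLp h) a
  rw [EuclideanSpace.single_apply] at this
  simp at this

lemma area_eq (a : Fin n) : G 0 ^ n = sphereArea n * I1 (n - 1) := by
  haveI := euclid_nontrivial a
  rw [← gauss_const (n := n), polar (fun x : EuclideanSpace ℝ (Fin n) => Real.exp (-‖x‖^2))]
  have hpt : ∀ z : sphere (0:EuclideanSpace ℝ (Fin n)) 1 × Ioi (0:ℝ),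
      Real.exp (-‖(z.2 : ℝ) • (z.1 : EuclideanSpace ℝ (Fin n))‖^2) = Real.exp (-(z.2:ℝ)^2) := by
    rintro ⟨y, r⟩
    have hy : ‖(y : EuclideanSpace ℝ (Fin n))‖ = 1 := mem_sphere_zero_iff_norm.1 y.2
    have hr : (0:ℝ) < r := r.2
    rw [norm_smul, hy, mul_one, Real.norm_eq_abs, abs_of_pos hr]
  rw [integral_congr_ae (Filter.Eventually.of_forall hpt), integral_fun_snd
    (fun r : Ioi (0:ℝ) => Real.exp (-(r:ℝ)^2)),
    ioipow_integral (n-1) (fun t => Real.exp (-t^2))]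
  rw [smul_eq_mul, I1]
  rfl

lemma sphere_moment (a b c d : Fin n) :
    ∫ y : sphere (0:EuclideanSpace ℝ (Fin n)) 1,
        ((y : EuclideanSpace ℝ (Fin n)) a * (y : EuclideanSpace ℝ (Fin n)) b *
          (y : EuclideanSpace ℝ (Fin n)) c * (y : EuclideanSpace ℝ (Fin n)) d)
        ∂((volume : Measure (EuclideanSpace ℝ (Fin n))).toSphere) =
      sphereArea n * ((if a = b then (1:ℝ) else 0) * (if c = d then 1 else 0)
        + (if a = c then 1 else 0) * (if b = d then 1 else 0)
        + (if a = d then 1 else 0) * (if b = c then 1 else 0)) / (n * (n + 2)) := by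
  haveI := euclid_nontrivial a
  have hn : 1 ≤ n := a.pos
  set M : ℝ := ∫ y : sphere (0:EuclideanSpace ℝ (Fin n)) 1,
      ((y : EuclideanSpace ℝ (Fin n)) a * (y : EuclideanSpace ℝ (Fin n)) b *
        (y : EuclideanSpace ℝ (Fin n)) c * (y : EuclideanSpace ℝ (Fin n)) d)
      ∂((volume : Measure (EuclideanSpace ℝ (Fin n))).toSphere) with hMdef
  set D : ℝ := ((if a = b then (1:ℝ) else 0) * (if c = d then 1 else 0)
        + (if a = c then 1 else 0) * (if b = d then 1 else 0)
        + (if a = d then 1 else 0) * (if b = c then 1 else 0)) with hDdef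
  have key : M * I1 (n + 3) = D * (sphereArea n * I1 (n - 1)) / 4 := by
    have h1 := gauss_moment a b c d
    rw [polar (fun x : EuclideanSpace ℝ (Fin n) =>
      x a * x b * x c * x d * Real.exp (-‖x‖^2))] at h1
    have hpt : ∀ z : sphere (0:EuclideanSpace ℝ (Fin n)) 1 × Ioi (0:ℝ),
        ((z.2:ℝ) • (z.1 : EuclideanSpace ℝ (Fin n))) a *
          ((z.2:ℝ) • (z.1 : EuclideanSpace ℝ (Fin n))) b *
          ((z.2:ℝ) • (z.1 : EuclideanSpace ℝ (Fin n))) c *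
          ((z.2:ℝ) • (z.1 : EuclideanSpace ℝ (Fin n))) d *
          Real.exp (-‖(z.2:ℝ) • (z.1 : EuclideanSpace ℝ (Fin n))‖^2) =
        ((z.1 : EuclideanSpace ℝ (Fin n)) a * (z.1 : EuclideanSpace ℝ (Fin n)) b *
          (z.1 : EuclideanSpace ℝ (Fin n)) c * (z.1 : EuclideanSpace ℝ (Fin n)) d) *
          ((z.2:ℝ)^4 * Real.exp (-(z.2:ℝ)^2)) := by
      rintro ⟨y, r⟩
      have hy : ‖(y : EuclideanSpace ℝ (Fin n))‖ = 1 := mem_sphere_zero_iff_norm.1 y.2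
      have hr : (0:ℝ) < r := r.2
      have hsm : ∀ j, ((r:ℝ) • (y : EuclideanSpace ℝ (Fin n))) j =
        (r:ℝ) * (y : EuclideanSpace ℝ (Fin n)) j := fun j => rfl
      rw [norm_smul, hy, mul_one, Real.norm_eq_abs, abs_of_pos hr, hsm, hsm, hsm, hsm]
      ring
    rw [integral_congr_ae (Filter.Eventually.of_forall hpt),
      integral_prod_mul (f := fun y : sphere (0:EuclideanSpace ℝ (Fin n)) 1 =>
        (y : EuclideanSpace ℝ (Fin n)) a * (y : EuclideanSpace ℝ (Fin n)) b *
          (y : EuclideanSpace ℝ (Fin n)) c * (y : EuclideanSpace ℝ (Fin n)) d)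
        (g := fun r : Ioi (0:ℝ) => (r:ℝ)^4 * Real.exp (-(r:ℝ)^2)),
      ioipow_integral (n-1) (fun t => t^4 * Real.exp (-t^2))] at h1
    have hpow : ∀ r : ℝ, r ^ (n-1) * (r^4 * Real.exp (-r^2)) = r ^ (n+3) * Real.exp (-r^2) := by
      intro r
      rw [← mul_assoc, ← pow_add, show n - 1 + 4 = n + 3 by omega]
    rw [setIntegral_congr_fun measurableSet_Ioi (fun r _ => hpow r), ← I1] at h1
    rw [← hMdef] at h1
    rw [h1, prod_G, area_eq a, ← hDdef]
  have hI3 : I1 (n + 3) = (((n:ℝ)+2)/2) * (((n:ℝ))/2 * I1 (n-1)) := by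
    have e1 : n + 3 = (n+1) + 2 := by omega
    have e2 : n + 1 = (n-1) + 2 := by omega
    rw [e1, I1_succ2, e2, I1_succ2]
    have h0 : ((n - 1 : ℕ) : ℝ) = (n:ℝ) - 1 := by
      rw [Nat.cast_sub hn]; norm_num
    push_cast
    rw [h0]
    ring
  have hJ : I1 (n-1) ≠ 0 := (I1_pos _).ne'
  have hnn : (0:ℝ) < n := by exact_mod_cast hn
  rw [hI3] at key
  have h2 : M * ((n:ℝ)*((n:ℝ)+2)) * I1 (n-1) = sphereArea n * D * I1 (n-1) := by
    linear_combination 4 * key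
  have h3 := mul_right_cancel₀ hJ h2
  rw [eq_div_iff (by positivity : ((n:ℝ)*((n:ℝ)+2)) ≠ 0)]
  linear_combination h3

/-! ### The derivative computation -/

lemma pd_quadratic (c : Fin n → Fin n → ℝ) (l : Fin n) (x : EuclideanSpace ℝ (Fin n)) :
    pd (fun x : EuclideanSpace ℝ (Fin n) => ∑ p, ∑ q, c p q * x p * x q) l x =
      ∑ j, (c l j + c j l) * x j := by
  have hfun : (fun x : EuclideanSpace ℝ (Fin n) => ∑ p, ∑ q, c p q * x p * x q) =
      (fun x : EuclideanSpace ℝ (Fin n) => ∑ p, ∑ q, c p q * (x p * x q)) := by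
    funext y; exact Finset.sum_congr rfl fun p _ => Finset.sum_congr rfl fun q _ => mul_assoc _ _ _
  rw [pd, hfun]
  have hd : HasFDerivAt (fun x : EuclideanSpace ℝ (Fin n) => ∑ p, ∑ q, c p q * (x p * x q))
      (∑ p, ∑ q, c p q • (x p • (EuclideanSpace.proj q :
          EuclideanSpace ℝ (Fin n) →L[ℝ] ℝ) +
        x q • (EuclideanSpace.proj p : EuclideanSpace ℝ (Fin n) →L[ℝ] ℝ))) x := by
    refine HasFDerivAt.fun_sum fun p _ => HasFDerivAt.fun_sum fun q _ => ?_
    have hp := (EuclideanSpace.proj p : EuclideanSpace ℝ (Fin n) →L[ℝ] ℝ).hasFDerivAt (x := x)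
    have hq := (EuclideanSpace.proj q : EuclideanSpace ℝ (Fin n) →L[ℝ] ℝ).hasFDerivAt (x := x)
    have hm := hp.mul hq
    exact hm.const_smul (c p q)
  rw [hd.fderiv]
  simp only [ContinuousLinearMap.coe_sum', Finset.sum_apply, ContinuousLinearMap.add_apply,
    ContinuousLinearMap.coe_smul', Pi.smul_apply, PiLp.proj_apply,
    EuclideanSpace.single_apply, smul_eq_mul, mul_ite, mul_one, mul_zero, mul_add]
  rw [Finset.sum_congr rfl (fun p _ => Finset.sum_add_distrib), Finset.sum_add_distrib]
  have h1 : ∀ p, (∑ q, if q = l then c p q * x p else 0) = c p l * x p := fun p => by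
    rw [Finset.sum_ite_eq' Finset.univ l (fun q => c p q * x p)]; simp
  have h2 : ∀ p, (∑ q, if p = l then c p q * x q else 0) =
      if p = l then ∑ q, c p q * x q else 0 := fun p => by split <;> simp
  rw [Finset.sum_congr rfl fun p _ => h1 p, Finset.sum_congr rfl fun p _ => h2 p,
    Finset.sum_ite_eq' Finset.univ l (fun p => ∑ q, c p q * x q)]
  simp only [Finset.mem_univ, if_true]
  rw [← Finset.sum_add_distrib]
  exact Finset.sum_congr rfl fun j _ => by ring

end Aux

open Real Set Metric in
theorem stmt9 (n : ℕ) (r : ℝ) (hr : 0 < r)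
    (W : Fin n → Fin n → Fin n → Fin n → ℝ)
    (hA1 : ∀ i j k l, W i j k l = -W j i k l)
    (hA2 : ∀ i j k l, W i j k l = -W i j l k)
    (hPair : ∀ i j k l, W i j k l = W k l i j)
    (hBianchi : ∀ i j k l, W i j k l + W i k l j + W i l j k = 0)
    (hTrace : ∀ j l, ∑ i, W i j i l = 0)
    (H : Fin n → Fin n → EuclideanSpace ℝ (Fin n) → ℝ)
    (hH : ∀ i k x, H i k x = ∑ p, ∑ q, W i p k q * x p * x q)
    (p q : Fin n) :
    ∫ x, (∑ i, ∑ k, ∑ l, (pd (H i k) l x) ^ 2) * x p * x q ∂(sphereMeasure n r) =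
      2 / (n * (n + 2)) * sphereArea n *
          (∑ i, ∑ k, ∑ l, (W i p k l + W i l k p) * (W i q k l + W i l k q)) * r ^ (n + 3) +
        1 / (n * (n + 2)) * sphereArea n *
          (∑ i, ∑ j, ∑ k, ∑ l, (W i j k l + W i l k j) ^ 2) *
          (if p = q then 1 else 0) * r ^ (n + 3) := by
  classical
  have hpd : ∀ (i k l : Fin n) (x : EuclideanSpace ℝ (Fin n)),
      pd (H i k) l x = ∑ j, (W i l k j + W i j k l) * x j := by
    intro i k l x
    have hHfun : H i k = fun x : EuclideanSpace ℝ (Fin n) =>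
        ∑ p, ∑ q, W i p k q * x p * x q := funext fun x => hH i k x
    rw [hHfun, pd_quadratic (fun p q => W i p k q) l x]
  simp only [hpd]
  -- continuity of coordinates
  have hco : ∀ j : Fin n, Continuous fun x : EuclideanSpace ℝ (Fin n) => x j :=
    fun j => (EuclideanSpace.proj j : EuclideanSpace ℝ (Fin n) →L[ℝ] ℝ).continuous
  have hcont : Continuous (fun x : EuclideanSpace ℝ (Fin n) =>
      (∑ i, ∑ k, ∑ l, (∑ j, (W i l k j + W i j k l) * x j)^2) * x p * x q) := by
    refine Continuous.mul (Continuous.mul ?_ (hco p)) (hco q)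
    refine continuous_finset_sum _ fun i _ => continuous_finset_sum _ fun k _ =>
      continuous_finset_sum _ fun l _ => ?_
    exact (continuous_finset_sum _ fun j _ => (continuous_const.mul (hco j))).pow 2
  -- unfold the measure
  unfold sphereMeasure
  rw [integral_smul_measure,
    MeasureTheory.integral_map (φ := fun y : sphere (0 : EuclideanSpace ℝ (Fin n)) 1 =>
        r • (y : EuclideanSpace ℝ (Fin n)))
      ((continuous_subtype_val.const_smul r).aemeasurable)
      hcont.aestronglyMeasurable,
    ENNReal.toReal_ofReal (Real.rpow_nonneg hr.le _)]
  -- pointwise scaling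
  have hpt : ∀ y : sphere (0 : EuclideanSpace ℝ (Fin n)) 1,
      (∑ i, ∑ k, ∑ l, (∑ j, (W i l k j + W i j k l) *
          (r • (y : EuclideanSpace ℝ (Fin n))) j)^2) *
        (r • (y : EuclideanSpace ℝ (Fin n))) p * (r • (y : EuclideanSpace ℝ (Fin n))) q =
      r^4 * ((∑ i, ∑ k, ∑ l, (∑ j, (W i l k j + W i j k l) *
          (y : EuclideanSpace ℝ (Fin n)) j)^2) *
        (y : EuclideanSpace ℝ (Fin n)) p * (y : EuclideanSpace ℝ (Fin n)) q) := by
    intro y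
    have hsm : ∀ j, (r • (y : EuclideanSpace ℝ (Fin n))) j =
        r * (y : EuclideanSpace ℝ (Fin n)) j := fun j => rfl
    simp only [hsm]
    have hin : ∀ i k l : Fin n, (∑ j, (W i l k j + W i j k l) *
        (r * (y : EuclideanSpace ℝ (Fin n)) j)) =
        r * ∑ j, (W i l k j + W i j k l) * (y : EuclideanSpace ℝ (Fin n)) j := by
      intro i k l
      rw [Finset.mul_sum]
      exact Finset.sum_congr rfl fun j _ => by ring
    rw [Finset.sum_congr rfl (fun i _ => Finset.sum_congr rfl (fun k _ =>
      Finset.sum_congr rfl (fun l _ => by rw [hin i k l, mul_pow])))]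
    simp only [← Finset.mul_sum]
    ring
  rw [integral_congr_ae (Filter.Eventually.of_forall hpt),
    MeasureTheory.integral_const_mul]
  -- expand the square and the products into monomials
  have hexp : ∀ y : sphere (0 : EuclideanSpace ℝ (Fin n)) 1,
      (∑ i, ∑ k, ∑ l, (∑ j, (W i l k j + W i j k l) * (y : EuclideanSpace ℝ (Fin n)) j)^2) *
        (y : EuclideanSpace ℝ (Fin n)) p * (y : EuclideanSpace ℝ (Fin n)) q =
      ∑ i, ∑ k, ∑ l, ∑ a, ∑ b, ((W i l k a + W i a k l) * (W i l k b + W i b k l)) *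
        ((y : EuclideanSpace ℝ (Fin n)) a * (y : EuclideanSpace ℝ (Fin n)) b *
          (y : EuclideanSpace ℝ (Fin n)) p * (y : EuclideanSpace ℝ (Fin n)) q) := by
    intro y
    simp only [pow_two, Finset.sum_mul, Finset.mul_sum]
    refine Finset.sum_congr rfl fun i _ => Finset.sum_congr rfl fun k _ =>
      Finset.sum_congr rfl fun l _ => Finset.sum_congr rfl fun a _ =>
      Finset.sum_congr rfl fun b _ => by ring
  rw [integral_congr_ae (Filter.Eventually.of_forall hexp)]
  -- integrability of monomials
  haveI : IsFiniteMeasure ((volume : Measure (EuclideanSpace ℝ (Fin n))).toSphere) := by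
    infer_instance
  have hcy : ∀ j : Fin n, Continuous fun y : sphere (0 : EuclideanSpace ℝ (Fin n)) 1 =>
      (y : EuclideanSpace ℝ (Fin n)) j := fun j => (hco j).comp continuous_subtype_val
  have hmono : ∀ a b : Fin n, Integrable (fun y : sphere (0 : EuclideanSpace ℝ (Fin n)) 1 =>
      (y : EuclideanSpace ℝ (Fin n)) a * (y : EuclideanSpace ℝ (Fin n)) b *
        (y : EuclideanSpace ℝ (Fin n)) p * (y : EuclideanSpace ℝ (Fin n)) q)
      ((volume : Measure (EuclideanSpace ℝ (Fin n))).toSphere) := fun a b =>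
    Continuous.integrable_of_hasCompactSupport
      ((((hcy a).mul (hcy b)).mul (hcy p)).mul (hcy q))
      (IsCompact.of_isClosed_subset isCompact_univ (isClosed_tsupport _) (Set.subset_univ _))
  -- exchange integral and sums
  have hI5 : ∫ y : sphere (0 : EuclideanSpace ℝ (Fin n)) 1,
      (∑ i, ∑ k, ∑ l, ∑ a, ∑ b, ((W i l k a + W i a k l) * (W i l k b + W i b k l)) *
        ((y : EuclideanSpace ℝ (Fin n)) a * (y : EuclideanSpace ℝ (Fin n)) b *
          (y : EuclideanSpace ℝ (Fin n)) p * (y : EuclideanSpace ℝ (Fin n)) q))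
      ∂((volume : Measure (EuclideanSpace ℝ (Fin n))).toSphere) =
      ∑ i, ∑ k, ∑ l, ∑ a, ∑ b, ((W i l k a + W i a k l) * (W i l k b + W i b k l)) *
        (sphereArea n * ((if a = b then (1:ℝ) else 0) * (if p = q then 1 else 0)
          + (if a = p then 1 else 0) * (if b = q then 1 else 0)
          + (if a = q then 1 else 0) * (if b = p then 1 else 0)) / (n * (n + 2))) := by
    rw [integral_finset_sum _ (fun i _ => integrable_finset_sum _ (fun k _ =>
      integrable_finset_sum _ (fun l _ => integrable_finset_sum _ (fun a _ =>
      integrable_finset_sum _ (fun b _ => (hmono a b).const_mul _)))))]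
    refine Finset.sum_congr rfl fun i _ => ?_
    rw [integral_finset_sum _ (fun k _ => integrable_finset_sum _ (fun l _ =>
      integrable_finset_sum _ (fun a _ =>
      integrable_finset_sum _ (fun b _ => (hmono a b).const_mul _))))]
    refine Finset.sum_congr rfl fun k _ => ?_
    rw [integral_finset_sum _ (fun l _ => integrable_finset_sum _ (fun a _ =>
      integrable_finset_sum _ (fun b _ => (hmono a b).const_mul _)))]
    refine Finset.sum_congr rfl fun l _ => ?_
    rw [integral_finset_sum _ (fun a _ =>
      integrable_finset_sum _ (fun b _ => (hmono a b).const_mul _))]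
    refine Finset.sum_congr rfl fun a _ => ?_
    rw [integral_finset_sum _ (fun b _ => (hmono a b).const_mul _)]
    refine Finset.sum_congr rfl fun b _ => ?_
    rw [MeasureTheory.integral_const_mul, sphere_moment a b p q]
  rw [hI5]
  -- evaluate the delta sums
  have hsum : ∀ i k l : Fin n,
      ∑ a, ∑ b, ((W i l k a + W i a k l) * (W i l k b + W i b k l)) *
        (sphereArea n * ((if a = b then (1:ℝ) else 0) * (if p = q then 1 else 0)
          + (if a = p then 1 else 0) * (if b = q then 1 else 0)
          + (if a = q then 1 else 0) * (if b = p then 1 else 0)) / (n * (n + 2))) =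
      (if p = q then (1:ℝ) else 0) * (sphereArea n / (n * (n + 2))) *
          (∑ a, (W i l k a + W i a k l)^2)
        + 2 * (sphereArea n / (n * (n + 2))) *
          ((W i l k p + W i p k l) * (W i l k q + W i q k l)) := by
    intro i k l
    have expand : ∀ a b : Fin n,
        ((W i l k a + W i a k l) * (W i l k b + W i b k l)) *
          (sphereArea n * ((if a = b then (1:ℝ) else 0) * (if p = q then 1 else 0)
            + (if a = p then 1 else 0) * (if b = q then 1 else 0)
            + (if a = q then 1 else 0) * (if b = p then 1 else 0)) / (n * (n + 2))) =
        (if a = b then ((W i l k a + W i a k l) * (W i l k b + W i b k l)) *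
            ((if p = q then (1:ℝ) else 0) * (sphereArea n / (n * (n + 2)))) else 0)
        + (if b = q then (if a = p then ((W i l k a + W i a k l) * (W i l k b + W i b k l)) *
            (sphereArea n / (n * (n + 2))) else 0) else 0)
        + (if b = p then (if a = q then ((W i l k a + W i a k l) * (W i l k b + W i b k l)) *
            (sphereArea n / (n * (n + 2))) else 0) else 0) := by
      intro a b
      split_ifs <;> ring
    simp only [expand, Finset.sum_add_distrib, Finset.sum_ite_eq, Finset.sum_ite_eq',
      Finset.mem_univ, if_true]
    have hA : (∑ a, (W i l k a + W i a k l) * (W i l k a + W i a k l) *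
        ((if p = q then (1:ℝ) else 0) * (sphereArea n / (n * (n + 2))))) =
        (if p = q then (1:ℝ) else 0) * (sphereArea n / (n * (n + 2))) *
          ∑ a, (W i l k a + W i a k l)^2 := by
      rw [Finset.mul_sum]
      exact Finset.sum_congr rfl fun a _ => by ring
    rw [hA]
    ring
  rw [Finset.sum_congr rfl (fun i _ => Finset.sum_congr rfl (fun k _ =>
    Finset.sum_congr rfl (fun l _ => hsum i k l)))]
  simp only [Finset.sum_add_distrib, ← Finset.mul_sum]
  -- bridges
  have hT3 : (∑ i, ∑ k, ∑ l, (W i p k l + W i l k p) * (W i q k l + W i l k q)) =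
      ∑ i, ∑ k, ∑ l, (W i l k p + W i p k l) * (W i l k q + W i q k l) :=
    Finset.sum_congr rfl fun i _ => Finset.sum_congr rfl fun k _ =>
      Finset.sum_congr rfl fun l _ => by ring
  have hT4 : (∑ i, ∑ j, ∑ k, ∑ l, (W i j k l + W i l k j) ^ 2) =
      ∑ i, ∑ k, ∑ l, ∑ j, (W i l k j + W i j k l) ^ 2 := by
    refine Finset.sum_congr rfl fun i _ => ?_
    rw [Finset.sum_comm]
  rw [hT3, hT4]
  have hrp : r ^ ((n:ℝ)-1) * r^(4:ℕ) = r^(n+3:ℕ) := by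
    rw [show r^(4:ℕ) = r^(((4:ℕ):ℕ):ℝ) from (Real.rpow_natCast r 4).symm,
      ← Real.rpow_add hr, show (n:ℝ) - 1 + ((4:ℕ):ℝ) = ((n+3:ℕ):ℝ) by push_cast; ring,
      Real.rpow_natCast]
  rw [smul_eq_mul, ← mul_assoc, hrp]
  ring
end

section
/- Let u(x) = (ε/(ε²+|x-ξ|²))^{(n-2)/2} on ℝⁿ, n ≥ 3. Then the pointwise identity ∂_i u ∂_k u - ((n-2)/(4(n-1))) ∂_i∂_k(u²) = (1/n)( |du|² - ((n-2)/(4(n-1))) Δ(u²) ) δ_{ik} holds for all x ∈ ℝⁿ and all 1 ≤ i,k ≤ n. -/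
open Real

variable {n : ℕ} {ξ x : EuclideanSpace ℝ (Fin n)} {ε : ℝ}

theorem hasB (c q : ℝ) (hε : 0 < ε) (x : EuclideanSpace ℝ (Fin n)) :
    HasFDerivAt (fun y : EuclideanSpace ℝ (Fin n) => c * (ε ^ 2 + ‖y - ξ‖ ^ 2) ^ q)
      ((c * q * (ε ^ 2 + ‖x - ξ‖ ^ 2) ^ (q - 1)) • (2 • (innerSL ℝ (x - ξ)))) x := by
  have hs : 0 < ε ^ 2 + ‖x - ξ‖ ^ 2 := by positivity
  have h1 : HasFDerivAt (fun y : EuclideanSpace ℝ (Fin n) => ε ^ 2 + ‖y - ξ‖ ^ 2)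
      (2 • (innerSL ℝ (x - ξ))) x := by
    have := ((hasFDerivAt_id x).sub_const ξ).norm_sq
    simpa using this.const_add (ε ^ 2)
  have h2 : HasDerivAt (fun t : ℝ => c * t ^ q) (c * (q * (ε ^ 2 + ‖x - ξ‖ ^ 2) ^ (q - 1)))
      (ε ^ 2 + ‖x - ξ‖ ^ 2) :=
    (Real.hasDerivAt_rpow_const (Or.inl hs.ne')).const_mul c
  have := h2.comp_hasFDerivAt x h1
  rw [show c * q * (ε ^ 2 + ‖x - ξ‖ ^ 2) ^ (q - 1) = c * (q * (ε ^ 2 + ‖x - ξ‖ ^ 2) ^ (q - 1)) by ring]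
  exact this

-- pd of B
theorem pdB (c q : ℝ) (hε : 0 < ε) (i : Fin n) (x : EuclideanSpace ℝ (Fin n)) :
    pd (fun y => c * (ε ^ 2 + ‖y - ξ‖ ^ 2) ^ q) i x
      = (2 * c * q * (ε ^ 2 + ‖x - ξ‖ ^ 2) ^ (q - 1)) * (x - ξ) i := by
  rw [pd, (hasB c q hε x).fderiv]
  simp [real_inner_comm, EuclideanSpace.inner_single_right]
  ring

-- coordinate function
theorem hasCoord (k : Fin n) (x : EuclideanSpace ℝ (Fin n)) :
    HasFDerivAt (fun y : EuclideanSpace ℝ (Fin n) => (y - ξ) k)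
      (EuclideanSpace.proj (𝕜 := ℝ) k) x := by
  have := (EuclideanSpace.proj (𝕜 := ℝ) k).hasFDerivAt.comp x ((hasFDerivAt_id x).sub_const ξ)
  exact this

theorem pdP (c q : ℝ) (hε : 0 < ε) (i k : Fin n) (x : EuclideanSpace ℝ (Fin n)) :
    pd (fun y => (c * (ε ^ 2 + ‖y - ξ‖ ^ 2) ^ q) * (y - ξ) k) i x
      = (2 * c * q * (ε ^ 2 + ‖x - ξ‖ ^ 2) ^ (q - 1)) * (x - ξ) i * (x - ξ) k
        + (c * (ε ^ 2 + ‖x - ξ‖ ^ 2) ^ q) * (if i = k then 1 else 0) := by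
  have h := (hasB (ξ := ξ) c q hε x).mul (hasCoord (ξ := ξ) k x)
  rw [pd, HasFDerivAt.fderiv (f := fun y => (c * (ε ^ 2 + ‖y - ξ‖ ^ 2) ^ q) * (y - ξ) k) h]
  simp [real_inner_comm, EuclideanSpace.inner_single_right, EuclideanSpace.single_apply,
    eq_comm]
  ring

theorem stmt18 (n : ℕ) (hn : 3 ≤ n) (ξ : EuclideanSpace ℝ (Fin n)) (ε : ℝ) (hε : 0 < ε)
    (u : EuclideanSpace ℝ (Fin n) → ℝ)
    (hu : ∀ x, u x = (ε / (ε ^ 2 + ‖x - ξ‖ ^ 2)) ^ (((n : ℝ) - 2) / 2)) :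
    ∀ (x : EuclideanSpace ℝ (Fin n)) (i k : Fin n),
      pd u i x * pd u k x -
          ((n : ℝ) - 2) / (4 * ((n : ℝ) - 1)) * pd (pd (fun y => (u y) ^ 2) k) i x =
        1 / n * ((∑ j, (pd u j x) ^ 2) -
            ((n : ℝ) - 2) / (4 * ((n : ℝ) - 1)) *
              ∑ j, pd (pd (fun y => (u y) ^ 2) j) j x) *
          (if i = k then 1 else 0) := by
  intro x i k
  have h3 : (3 : ℝ) ≤ (n : ℝ) := by exact_mod_cast hn
  have hn0 : (n : ℝ) ≠ 0 := by linarith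
  have hn1 : (n : ℝ) - 1 ≠ 0 := by linarith
  set p : ℝ := ((n : ℝ) - 2) / 2 with hp
  set a : ℝ := ε ^ p with ha
  set q2 : ℝ := -p + -p with hq2
  have hpos : ∀ y : EuclideanSpace ℝ (Fin n), (0:ℝ) < ε ^ 2 + ‖y - ξ‖ ^ 2 := fun y => by positivity
  -- rewrite u
  have hu1 : u = fun y => a * (ε ^ 2 + ‖y - ξ‖ ^ 2) ^ (-p) := by
    funext y
    rw [hu y, Real.div_rpow hε.le (hpos y).le, Real.rpow_neg (hpos y).le, div_eq_mul_inv]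
  have husq : (fun y => (u y) ^ 2) = fun y => a ^ 2 * (ε ^ 2 + ‖y - ξ‖ ^ 2) ^ q2 := by
    funext y
    rw [hu1]
    simp only
    rw [mul_pow, sq ((ε ^ 2 + ‖y - ξ‖ ^ 2) ^ (-p)), ← Real.rpow_add (hpos y), hq2]
  set s : ℝ := ε ^ 2 + ‖x - ξ‖ ^ 2 with hsdef
  have hs : 0 < s := hpos x
  set c1 : ℝ := 2 * a ^ 2 * q2 with hc1
  set D : ℝ := 2 * a * (-p) * s ^ (-p - 1) with hD
  set E : ℝ := 2 * c1 * (q2 - 1) * s ^ (q2 - 1 - 1) with hE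
  set F : ℝ := c1 * s ^ (q2 - 1) with hF
  set C : ℝ := ((n : ℝ) - 2) / (4 * ((n : ℝ) - 1)) with hC
  have h1st : ∀ j : Fin n, pd u j x = D * (x - ξ) j := by
    intro j
    rw [hu1, pdB a (-p) hε j x]
  have hsnd : pd (fun y => (u y) ^ 2) = fun k' y =>
      (c1 * (ε ^ 2 + ‖y - ξ‖ ^ 2) ^ (q2 - 1)) * (y - ξ) k' := by
    funext k' y
    rw [husq, pdB (a ^ 2) q2 hε k' y]
  have h2nd : ∀ (i' k' : Fin n), pd (pd (fun y => (u y) ^ 2) k') i' x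
      = E * (x - ξ) i' * (x - ξ) k' + F * (if i' = k' then 1 else 0) := by
    intro i' k'
    rw [show pd (fun y => (u y) ^ 2) k' = fun y =>
        (c1 * (ε ^ 2 + ‖y - ξ‖ ^ 2) ^ (q2 - 1)) * (y - ξ) k' from congrFun hsnd k',
      pdP c1 (q2 - 1) hε i' k' x]
  -- key identity
  have key : D * D = C * E := by
    have hrw : s ^ (-p - 1) * s ^ (-p - 1) = s ^ (q2 - 1 - 1) := by
      rw [← Real.rpow_add hs]; congr 1; rw [hq2]; ring
    have hc : (2 * a * (-p)) * (2 * a * (-p)) = C * (2 * c1 * (q2 - 1)) := by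
      rw [hc1, hq2, hC, hp]
      field_simp
      ring
    calc D * D = ((2 * a * (-p)) * (2 * a * (-p))) * (s ^ (-p - 1) * s ^ (-p - 1)) := by
          rw [hD]; ring
      _ = (C * (2 * c1 * (q2 - 1))) * s ^ (q2 - 1 - 1) := by rw [hrw, hc]
      _ = C * E := by rw [hE]; ring
  -- sum of squares of coordinates
  have hS : ∑ j, ((x - ξ) j) ^ 2 = ‖x - ξ‖ ^ 2 := by
    rw [EuclideanSpace.norm_eq, Real.sq_sqrt (by positivity)]
    simp [Real.norm_eq_abs, sq_abs]
  simp only [h1st, h2nd]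
  have sum1 : ∑ j, (D * (x - ξ) j) ^ 2 = D ^ 2 * ‖x - ξ‖ ^ 2 := by
    rw [← hS, Finset.mul_sum]
    exact Finset.sum_congr rfl fun j _ => by ring
  have sum2 : ∑ j, (E * (x - ξ) j * (x - ξ) j + F * (if True then 1 else 0))
      = E * ‖x - ξ‖ ^ 2 + n * F := by
    have he : ∀ j : Fin n, E * (x - ξ) j * (x - ξ) j + F * (if True then 1 else 0)
        = E * ((x - ξ) j) ^ 2 + F := by
      intro j; rw [if_pos trivial]; ring
    rw [Finset.sum_congr rfl fun j _ => he j, Finset.sum_add_distrib, ← Finset.mul_sum, hS]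
    simp [mul_comm]
  rw [sum1, sum2]
  clear_value D E F C
  rcases eq_or_ne i k with h | h
  · subst h
    rw [if_pos rfl]
    generalize (x - ξ) i = yi
    generalize ‖x - ξ‖ ^ 2 = S
    have e1 : D * yi * (D * yi) - C * (E * yi * yi + F * 1) = -(C * F) := by
      linear_combination (yi * yi) * key
    have hD2 : D ^ 2 = C * E := by rw [sq]; exact key
    have e2 : 1 / (n : ℝ) * (D ^ 2 * S - C * (E * S + n * F)) * 1 = -(C * F) := by
      rw [hD2]; field_simp; ring
    rw [e1, e2]
  · simp only [if_neg h, mul_zero, mul_one]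
    linear_combination ((x - ξ) i * (x - ξ) k) * key
end
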